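/- For every integer n ≥ 1, the supremum M_n = sup_{f∈B₁} |c_n(f)| is attained: there exists f⁰ ∈ B₁ with |c_n(f⁰)| = M_n; moreover M_n ≥ 2/e > 0 and any such maximizer f⁰ is nonconstant. -/

import Mathlib

/-!
Taylor coefficients of functions in `B₁` are bounded by `1` (Cauchy estimates), so a maximizing
sequence for `|c_n|` has a subsequence whose coefficients converge, and the limit power series is a
locally uniform limit of the subsequence on `Δ`. Its `n`-th coefficient has norm `M_n ≥ 2/e > 0`,
the value attained by `κ₀(zⁿ)`, so it is nonconstant; therefore it maps `Δ` into the open disk by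
the maximum modulus principle, and it omits `0` by Hurwitz's theorem.
-/

/-- The `n`-th Taylor coefficient of `f` at `0`. -/
noncomputable def taylorCoeff (f : ℂ → ℂ) (n : ℕ) : ℂ :=
  iteratedDeriv n f 0 / n.factorial

/-- The class `B₁` of holomorphic maps of `Δ` into the punctured disk `Δ*`. -/
def B1 : Set (ℂ → ℂ) :=
  {f | DifferentiableOn ℂ f (Metric.ball (0 : ℂ) 1) ∧
    ∀ z ∈ Metric.ball (0 : ℂ) 1, f z ≠ 0 ∧ ‖f z‖ < 1}

open Metric Set Filter Topology FormalMultilinearSeries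
open scoped NNReal ENNReal

lemma taylorCoeff_eq_of_hasFPowerSeriesAt {f : ℂ → ℂ} {c : ℕ → ℂ}
    (h : HasFPowerSeriesAt f (ofScalars ℂ c) 0) : taylorCoeff f = c :=
  ofScalars_series_injective ℂ ℂ (h.analyticAt.hasFPowerSeriesAt.eq_formalMultilinearSeries h)

lemma le_radius_ofScalars_of_summable {c : ℕ → ℂ} {r : ℝ≥0}
    (h : ∀ z ∈ ball (0 : ℂ) r, Summable fun k => c k * z ^ k) :
    (r : ℝ≥0∞) ≤ (ofScalars ℂ c).radius := by
  refine ENNReal.le_of_forall_nnreal_lt fun t ht => ?_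
  have ht' : ((t : ℝ) : ℂ) ∈ ball (0 : ℂ) r := by
    simpa [abs_of_nonneg t.coe_nonneg] using ht
  refine (ofScalars ℂ c).le_radius_of_tendsto (l := 0) ?_
  simpa [ofScalars_norm, abs_of_nonneg t.coe_nonneg] using (h _ ht').tendsto_atTop_zero.norm

lemma taylorCoeff_eq_of_hasSum {f : ℂ → ℂ} {c : ℕ → ℂ} {r : ℝ≥0} (hr : 0 < r)
    (h : ∀ z ∈ ball (0 : ℂ) r, HasSum (fun k => c k * z ^ k) (f z)) : taylorCoeff f = c := by
  refine taylorCoeff_eq_of_hasFPowerSeriesAt ⟨r, ?_⟩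
  refine ⟨le_radius_ofScalars_of_summable fun z hz => (h z hz).summable, by exact_mod_cast hr,
    fun {y} hy => ?_⟩
  rw [eball_coe] at hy
  simpa [ofScalars_apply_eq, mul_comm] using h y hy

lemma hasSum_taylorCoeff_mul_pow {f : ℂ → ℂ} {r : ℝ} (hf : DifferentiableOn ℂ f (ball 0 r))
    {z : ℂ} (hz : z ∈ ball 0 r) : HasSum (fun k => taylorCoeff f k * z ^ k) (f z) := by
  simpa [taylorCoeff, div_eq_mul_inv, mul_comm, mul_left_comm] using
    Complex.hasSum_taylorSeries_on_ball hf hz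

lemma taylorCoeff_one (f : ℂ → ℂ) : taylorCoeff f 1 = deriv f 0 := by
  simp [taylorCoeff, iteratedDeriv_one]

lemma taylorCoeff_eq_zero_of_eventuallyEq_const {f : ℂ → ℂ} {a : ℂ}
    (h : f =ᶠ[𝓝 0] fun _ => a) {k : ℕ} (hk : k ≠ 0) : taylorCoeff f k = 0 := by
  simp [taylorCoeff, h.iteratedDeriv_eq, iteratedDeriv_const, hk]

lemma norm_taylorCoeff_le_one {f : ℂ → ℂ} (hf : DifferentiableOn ℂ f (ball 0 1))
    (hb : ∀ z ∈ ball (0 : ℂ) 1, ‖f z‖ ≤ 1) (k : ℕ) : ‖taylorCoeff f k‖ ≤ 1 := by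
  have hcauchy : ∀ R ∈ Ioo (0 : ℝ) 1, ‖taylorCoeff f k‖ * R ^ k ≤ 1 := by
    rintro R ⟨hR0, hR1⟩
    have hsub : closedBall (0 : ℂ) R ⊆ ball 0 1 := closedBall_subset_ball hR1
    have h := Complex.norm_iteratedDeriv_le_of_forall_mem_sphere_norm_le k hR0
      ((hf.mono hsub).diffContOnCl_ball le_rfl) fun z hz =>
        hb z (hsub (sphere_subset_closedBall hz))
    rw [mul_one, le_div_iff₀ (by positivity)] at h
    calc ‖taylorCoeff f k‖ * R ^ k = ‖iteratedDeriv k f 0‖ * R ^ k / k.factorial := by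
          rw [taylorCoeff, norm_div, Complex.norm_natCast, div_mul_eq_mul_div]
      _ ≤ 1 := (div_le_one (by positivity)).2 h
  have hlim : Tendsto (fun R : ℝ => ‖taylorCoeff f k‖ * R ^ k) (𝓝[<] 1)
      (𝓝 ‖taylorCoeff f k‖) :=
    ((continuous_pow k).const_mul _).tendsto' 1 _ (by simp) |>.mono_left nhdsWithin_le_nhds
  exact le_of_tendsto hlim (mem_of_superset (Ioo_mem_nhdsLT zero_lt_one) hcauchy)

lemma summable_norm_mul_pow_of_norm_le {b : ℕ → ℂ} {C r : ℝ} (hb : ∀ k, ‖b k‖ ≤ C)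
    (hr0 : 0 ≤ r) (hr : r < 1) : Summable fun k => ‖b k‖ * r ^ k :=
  ((summable_geometric_of_lt_one hr0 hr).mul_left C).of_nonneg_of_le (fun _ => by positivity)
    fun k => by gcongr; exact hb k

lemma norm_tsum_mul_pow_le {b : ℕ → ℂ} {C r : ℝ} (hb : ∀ k, ‖b k‖ ≤ C) (hr : r < 1) {z : ℂ}
    (hz : ‖z‖ ≤ r) : ‖∑' k, b k * z ^ k‖ ≤ ∑' k, ‖b k‖ * r ^ k := by
  have hle : ∀ k, ‖b k * z ^ k‖ ≤ ‖b k‖ * r ^ k := fun k => by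
    rw [norm_mul, norm_pow]; gcongr
  have hs := summable_norm_mul_pow_of_norm_le hb ((norm_nonneg z).trans hz) hr
  have hs' : Summable fun k => ‖b k * z ^ k‖ := hs.of_nonneg_of_le (fun _ => norm_nonneg _) hle
  exact (norm_tsum_le_tsum_norm hs').trans (hs'.tsum_le_tsum hle hs)

lemma hasSum_tsum_mul_pow_of_norm_le {b : ℕ → ℂ} {C : ℝ} (hb : ∀ k, ‖b k‖ ≤ C) {z : ℂ}
    (hz : ‖z‖ < 1) : HasSum (fun k => b k * z ^ k) (∑' k, b k * z ^ k) :=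
  (Summable.of_norm_bounded (summable_norm_mul_pow_of_norm_le hb (norm_nonneg z) hz)
    fun k => (norm_mul_le _ _).trans_eq (by rw [norm_pow])).hasSum

lemma tendstoUniformlyOn_tsum_mul_pow {ι : Type*} {l : Filter ι} {a : ι → ℕ → ℂ} {c : ℕ → ℂ}
    {C r : ℝ} (ha : ∀ i k, ‖a i k‖ ≤ C) (hc : ∀ k, ‖c k‖ ≤ C)
    (hlim : ∀ k, Tendsto (fun i => a i k) l (𝓝 (c k))) (hr0 : 0 ≤ r) (hr : r < 1) :
    TendstoUniformlyOn (fun i z => ∑' k, a i k * z ^ k) (fun z => ∑' k, c k * z ^ k) l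
      (closedBall 0 r) := by
  have hdiff : ∀ i k, ‖c k - a i k‖ ≤ 2 * C := fun i k =>
    (norm_sub_le _ _).trans (by linarith [hc k, ha i k])
  have herr : Tendsto (fun i => ∑' k, ‖c k - a i k‖ * r ^ k) l (𝓝 0) := by
    simpa using tendsto_tsum_of_dominated_convergence (g := fun _ => (0 : ℝ))
      ((summable_geometric_of_lt_one hr0 hr).mul_left (2 * C))
      (fun k => by simpa using ((hlim k).const_sub (c k)).norm.mul_const (r ^ k))
      (Eventually.of_forall fun i k => by
        rw [Real.norm_of_nonneg (by positivity)]; gcongr; exact hdiff i k)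
  rw [Metric.tendstoUniformlyOn_iff]
  intro ε hε
  filter_upwards [herr.eventually (gt_mem_nhds hε)] with i hi z hz
  have hz1 : ‖z‖ < 1 := (mem_closedBall_zero_iff.1 hz).trans_lt hr
  have hsub : ∑' k, c k * z ^ k - ∑' k, a i k * z ^ k = ∑' k, (c k - a i k) * z ^ k := by
    simpa [sub_mul] using ((hasSum_tsum_mul_pow_of_norm_le hc hz1).sub
      (hasSum_tsum_mul_pow_of_norm_le (ha i) hz1)).tsum_eq.symm
  rw [dist_eq_norm, hsub]
  exact (norm_tsum_mul_pow_le (hdiff i) hr (mem_closedBall_zero_iff.1 hz)).trans_lt hi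

lemma tendstoLocallyUniformlyOn_tsum_mul_pow {ι : Type*} {l : Filter ι} {a : ι → ℕ → ℂ}
    {c : ℕ → ℂ} {C : ℝ} (ha : ∀ i k, ‖a i k‖ ≤ C) (hc : ∀ k, ‖c k‖ ≤ C)
    (hlim : ∀ k, Tendsto (fun i => a i k) l (𝓝 (c k))) :
    TendstoLocallyUniformlyOn (fun i z => ∑' k, a i k * z ^ k) (fun z => ∑' k, c k * z ^ k) l
      (ball 0 1) := by
  rw [tendstoLocallyUniformlyOn_iff_forall_isCompact isOpen_ball]
  intro K hKsub hK
  obtain ⟨r, hr, hKr⟩ := exists_pos_lt_subset_ball one_pos hK.isClosed hKsub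
  exact (tendstoUniformlyOn_tsum_mul_pow ha hc hlim hr.1.le hr.2).mono
    (hKr.trans ball_subset_closedBall)

lemma le_norm_of_forall_mem_frontier_le_norm {g : ℂ → ℂ} {U : Set ℂ} {δ : ℝ}
    (hU : Bornology.IsBounded U) (hg : DiffContOnCl ℂ g U) (hne : ∀ w ∈ closure U, g w ≠ 0)
    (hδ : 0 < δ) (hb : ∀ w ∈ frontier U, δ ≤ ‖g w‖) {z : ℂ} (hz : z ∈ closure U) :
    δ ≤ ‖g z‖ := by
  have h := Complex.norm_le_of_forall_mem_frontier_norm_le hU (hg.inv hne) (C := δ⁻¹)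
    (fun w hw => by rw [Pi.inv_apply, norm_inv]; exact inv_anti₀ hδ (hb w hw)) hz
  rwa [Pi.inv_apply, norm_inv, inv_le_inv₀ (norm_pos_iff.2 (hne z hz)) hδ] at h

lemma ne_zero_of_tendstoUniformlyOn_closedBall {ι : Type*} {l : Filter ι} [l.NeBot]
    {F : ι → ℂ → ℂ} {f : ℂ → ℂ} {z₀ : ℂ} {ρ : ℝ} (hρ : 0 < ρ)
    (hF : ∀ᶠ i in l, DifferentiableOn ℂ (F i) (closedBall z₀ ρ) ∧
      ∀ z ∈ closedBall z₀ ρ, F i z ≠ 0)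
    (hlim : TendstoUniformlyOn F f l (closedBall z₀ ρ)) (hf : ContinuousOn f (sphere z₀ ρ))
    (hsphere : ∀ z ∈ sphere z₀ ρ, f z ≠ 0) : f z₀ ≠ 0 := by
  obtain ⟨w, hw, hmin⟩ := (isCompact_sphere z₀ ρ).exists_isMinOn
    (NormedSpace.sphere_nonempty.2 hρ.le) hf.norm
  have hm : 0 < ‖f w‖ := norm_pos_iff.2 (hsphere w hw)
  obtain ⟨i, ⟨hFi, hFne⟩, hclose⟩ :=
    (hF.and (Metric.tendstoUniformlyOn_iff.1 hlim _ (half_pos hm))).exists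
  -- `‖F i‖ > ‖f w‖ / 2` on the sphere, hence at its centre by the minimum modulus principle.
  have hFz₀ : ‖f w‖ / 2 ≤ ‖F i z₀‖ := by
    refine le_norm_of_forall_mem_frontier_le_norm (isBounded_ball (x := z₀) (r := ρ)) ?_ ?_
      (half_pos hm) ?_ ?_
    · rw [← closure_ball z₀ hρ.ne'] at hFi
      exact hFi.diffContOnCl
    · rwa [closure_ball z₀ hρ.ne']
    · intro z hz
      rw [frontier_ball z₀ hρ.ne'] at hz
      have h1 := hclose z (sphere_subset_closedBall hz)
      have h2 : ‖f w‖ ≤ ‖f z‖ := hmin hz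
      rw [dist_eq_norm] at h1
      linarith [norm_sub_norm_le (f z) (F i z)]
    · exact subset_closure (mem_ball_self hρ)
  have h := hclose z₀ (mem_closedBall_self hρ.le)
  rw [dist_eq_norm] at h
  rw [← norm_pos_iff]
  linarith [norm_sub_norm_le (F i z₀) (f z₀), norm_sub_rev (f z₀) (F i z₀)]

lemma exists_sphere_subset_ne_zero {f : ℂ → ℂ} {U : Set ℂ} (hU : IsOpen U)
    (hUc : IsPreconnected U) (hf : DifferentiableOn ℂ f U) (hf0 : ¬ EqOn f 0 U) {z₀ : ℂ}
    (hz₀ : z₀ ∈ U) : ∃ ρ > 0, closedBall z₀ ρ ⊆ U ∧ ∀ z ∈ sphere z₀ ρ, f z ≠ 0 := by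
  have hA := hf.analyticOnNhd hU
  have hev : ∀ᶠ z in 𝓝[≠] z₀, f z ≠ 0 :=
    (hA z₀ hz₀).eventually_eq_zero_or_eventually_ne_zero.resolve_left fun h =>
      hf0 (hA.eqOn_zero_of_preconnected_of_eventuallyEq_zero hUc hz₀ h)
  obtain ⟨ε, hε, hεne⟩ := Metric.mem_nhdsWithin_iff.1 hev
  obtain ⟨δ, hδ, hδU⟩ := Metric.isOpen_iff.1 hU z₀ hz₀
  refine ⟨min ε δ / 2, by positivity, (closedBall_subset_ball ?_).trans hδU, fun z hz => ?_⟩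
  · linarith [min_le_right ε δ, lt_min hε hδ]
  · have hρ : 0 < min ε δ / 2 := by positivity
    refine hεne ⟨?_, ?_⟩
    · rw [mem_ball, mem_sphere.1 hz]
      linarith [min_le_left ε δ]
    · rintro rfl
      simp only [mem_sphere, dist_self] at hz
      exact hρ.ne hz

theorem eqOn_zero_or_forall_ne_zero_of_tendstoLocallyUniformlyOn {ι : Type*} {l : Filter ι}
    [l.NeBot] {F : ι → ℂ → ℂ} {f : ℂ → ℂ} {U : Set ℂ} (hU : IsOpen U) (hUc : IsPreconnected U)
    (hF : ∀ᶠ i in l, DifferentiableOn ℂ (F i) U ∧ ∀ z ∈ U, F i z ≠ 0)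
    (hlim : TendstoLocallyUniformlyOn F f l U) : EqOn f 0 U ∨ ∀ z ∈ U, f z ≠ 0 := by
  have hf : DifferentiableOn ℂ f U := hlim.differentiableOn (hF.mono fun _ h => h.1) hU
  refine or_iff_not_imp_left.2 fun hf0 z₀ hz₀ => ?_
  obtain ⟨ρ, hρ, hsub, hsphere⟩ := exists_sphere_subset_ne_zero hU hUc hf hf0 hz₀
  exact ne_zero_of_tendstoUniformlyOn_closedBall hρ
    (hF.mono fun i h => ⟨h.1.mono hsub, fun z hz => h.2 z (hsub hz)⟩)
    ((tendstoLocallyUniformlyOn_iff_forall_isCompact hU).1 hlim _ hsub (isCompact_closedBall _ _))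
    (hf.continuousOn.mono (sphere_subset_closedBall.trans hsub)) hsphere

lemma mem_B1_of_tendstoLocallyUniformlyOn {ι : Type*} {l : Filter ι} [l.NeBot]
    {F : ι → ℂ → ℂ} {f : ℂ → ℂ} (hF : ∀ i, F i ∈ B1)
    (hlim : TendstoLocallyUniformlyOn F f l (ball 0 1))
    (hnc : ¬ ∃ a : ℂ, ∀ z ∈ ball (0 : ℂ) 1, f z = a) : f ∈ B1 := by
  have hf : DifferentiableOn ℂ f (ball 0 1) :=
    hlim.differentiableOn (Eventually.of_forall fun i => (hF i).1) isOpen_ball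
  have hle : ∀ z ∈ ball (0 : ℂ) 1, ‖f z‖ ≤ 1 := fun z hz =>
    le_of_tendsto (hlim.tendsto_at hz).norm
      (Eventually.of_forall fun i => ((hF i).2 z hz).2.le)
  have hlt : ∀ z ∈ ball (0 : ℂ) 1, ‖f z‖ < 1 := by
    refine fun z hz => (hle z hz).lt_of_ne fun h => hnc ⟨f z, fun w hw => ?_⟩
    exact Complex.eqOn_of_isPreconnected_of_isMaxOn_norm (convex_ball 0 1).isPreconnected
      isOpen_ball hf hz (fun w hw => (hle w hw).trans h.ge) hw
  have hne : ∀ z ∈ ball (0 : ℂ) 1, f z ≠ 0 :=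
    (eqOn_zero_or_forall_ne_zero_of_tendstoLocallyUniformlyOn isOpen_ball
      (convex_ball 0 1).isPreconnected
      (Eventually.of_forall fun i => ⟨(hF i).1, fun z hz => ((hF i).2 z hz).1⟩) hlim).resolve_left
      fun h0 => hnc ⟨0, h0⟩
  exact ⟨hf, fun z hz => ⟨hne z hz, hlt z hz⟩⟩

lemma norm_taylorCoeff_le_one_of_mem_B1 {f : ℂ → ℂ} (hf : f ∈ B1) (k : ℕ) :
    ‖taylorCoeff f k‖ ≤ 1 :=
  norm_taylorCoeff_le_one hf.1 (fun z hz => (hf.2 z hz).2.le) k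

lemma exists_subseq_tendstoLocallyUniformlyOn_of_mem_B1 {F : ℕ → ℂ → ℂ} (hF : ∀ j, F j ∈ B1) :
    ∃ φ : ℕ → ℕ, StrictMono φ ∧ ∃ f : ℂ → ℂ,
      TendstoLocallyUniformlyOn (F ∘ φ) f atTop (ball 0 1) ∧
      ∀ k, Tendsto (fun j => taylorCoeff (F (φ j)) k) atTop (𝓝 (taylorCoeff f k)) := by
  obtain ⟨c, hc, φ, hφ, hlim⟩ :=
    (isCompact_univ_pi fun _ => isCompact_closedBall (0 : ℂ) 1).tendsto_subseq
      (x := fun j k => taylorCoeff (F j) k) fun j k _ =>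
        mem_closedBall_zero_iff.2 (norm_taylorCoeff_le_one_of_mem_B1 (hF j) k)
  have hc1 : ∀ k, ‖c k‖ ≤ 1 := fun k => mem_closedBall_zero_iff.1 (hc k (mem_univ k))
  rw [tendsto_pi_nhds] at hlim
  have hcoeff : taylorCoeff (fun z => ∑' k, c k * z ^ k) = c :=
    taylorCoeff_eq_of_hasSum one_pos fun z hz =>
      hasSum_tsum_mul_pow_of_norm_le hc1 (by simpa using hz)
  refine ⟨φ, hφ, fun z => ∑' k, c k * z ^ k, ?_, by rwa [hcoeff]⟩
  refine (tendstoLocallyUniformlyOn_tsum_mul_pow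
    (fun j k => norm_taylorCoeff_le_one_of_mem_B1 (hF (φ j)) k) hc1 hlim).congr fun j z hz => ?_
  exact (hasSum_taylorCoeff_mul_pow (hF (φ j)).1 hz).tsum_eq

noncomputable def kappa0 (z : ℂ) : ℂ := Complex.exp ((z - 1) / (z + 1))

lemma add_one_ne_zero_of_norm_lt_one {z : ℂ} (hz : ‖z‖ < 1) : z + 1 ≠ 0 := by
  rintro h
  rw [eq_neg_of_add_eq_zero_left h] at hz
  simp at hz

lemma re_sub_one_div_add_one_neg {z : ℂ} (hz : ‖z‖ < 1) : ((z - 1) / (z + 1)).re < 0 := by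
  have hre : ((z - 1) / (z + 1)).re = (Complex.normSq z - 1) / Complex.normSq (z + 1) := by
    simp only [Complex.div_re, Complex.normSq_apply, Complex.sub_re, Complex.sub_im,
      Complex.add_re, Complex.add_im, Complex.one_re, Complex.one_im]
    ring
  rw [hre]
  refine div_neg_of_neg_of_pos ?_ (Complex.normSq_pos.2 (add_one_ne_zero_of_norm_lt_one hz))
  rw [← Complex.sq_norm]
  nlinarith [norm_nonneg z]

lemma kappa0_mem_B1 : kappa0 ∈ B1 := by
  refine ⟨?_, fun z hz => ⟨Complex.exp_ne_zero _, ?_⟩⟩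
  · exact ((differentiableOn_id.sub_const 1).div (differentiableOn_id.add_const 1)
      fun z hz => add_one_ne_zero_of_norm_lt_one (mem_ball_zero_iff.1 hz)).cexp
  · rw [kappa0, Complex.norm_exp, Real.exp_lt_one_iff]
    exact re_sub_one_div_add_one_neg (mem_ball_zero_iff.1 hz)

lemma hasDerivAt_kappa0 : HasDerivAt kappa0 (2 * Complex.exp (-1)) 0 := by
  have h : HasDerivAt (fun z : ℂ => (z - 1) / (z + 1)) 2 0 :=
    (((hasDerivAt_id (0 : ℂ)).sub_const 1).fun_div ((hasDerivAt_id (0 : ℂ)).add_const 1)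
      (by norm_num)).congr_deriv (by norm_num)
  exact h.cexp.congr_deriv (by norm_num [mul_comm])

lemma mapsTo_pow_ball_zero_one {n : ℕ} (hn : n ≠ 0) :
    MapsTo (fun z : ℂ => z ^ n) (ball 0 1) (ball 0 1) := fun z hz => by
  rw [mem_ball_zero_iff, norm_pow]
  exact pow_lt_one₀ (norm_nonneg z) (mem_ball_zero_iff.1 hz) hn

lemma comp_pow_mem_B1 {f : ℂ → ℂ} (hf : f ∈ B1) {n : ℕ} (hn : n ≠ 0) :
    (fun z => f (z ^ n)) ∈ B1 :=
  ⟨hf.1.comp (differentiable_pow n).differentiableOn (mapsTo_pow_ball_zero_one hn),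
    fun _ hz => hf.2 _ (mapsTo_pow_ball_zero_one hn hz)⟩

lemma taylorCoeff_comp_pow {g : ℂ → ℂ} (hg : DifferentiableOn ℂ g (ball 0 1)) {n : ℕ}
    (hn : n ≠ 0) (m : ℕ) : taylorCoeff (fun z => g (z ^ n)) (n * m) = taylorCoeff g m := by
  have hinj : Function.Injective (n * ·) := fun a b h => Nat.eq_of_mul_eq_mul_left
    (Nat.pos_of_ne_zero hn) h
  set c : ℕ → ℂ := fun k => if n ∣ k then taylorCoeff g (k / n) else 0
  have hc : ∀ m, c (n * m) = taylorCoeff g m := fun m => by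
    simp [c, Nat.mul_div_cancel_left m (Nat.pos_of_ne_zero hn)]
  suffices taylorCoeff (fun z => g (z ^ n)) = c by rw [this, hc]
  refine taylorCoeff_eq_of_hasSum one_pos fun z hz => ?_
  rw [NNReal.coe_one] at hz
  rw [← hinj.hasSum_iff fun k hk => ?_]
  · simpa [Function.comp_def, hc, pow_mul] using
      hasSum_taylorCoeff_mul_pow hg (mapsTo_pow_ball_zero_one hn hz)
  · have hndvd : ¬ n ∣ k := fun ⟨m, hm⟩ => hk ⟨m, hm.symm⟩
    simp [c, hndvd]

lemma norm_taylorCoeff_kappa0_comp_pow {n : ℕ} (hn : n ≠ 0) :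
    ‖taylorCoeff (fun z => kappa0 (z ^ n)) n‖ = 2 / Real.exp 1 := by
  have h := taylorCoeff_comp_pow kappa0_mem_B1.1 hn 1
  rw [mul_one] at h
  rw [h, taylorCoeff_one, hasDerivAt_kappa0.deriv, norm_mul, Complex.norm_exp]
  simp [Real.exp_neg, div_eq_mul_inv]

/-- For each `n ≥ 1`, the supremum `M_n = sup_{f ∈ B₁} |c_n(f)|` is attained,
`M_n ≥ 2/e > 0`, and any maximizer is nonconstant on `Δ`. -/
theorem sup_coeff_attained (n : ℕ) (hn : 1 ≤ n) :
    (∃ f0 ∈ B1, ‖taylorCoeff f0 n‖ =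
      sSup {x : ℝ | ∃ f ∈ B1, x = ‖taylorCoeff f n‖}) ∧
    (2 / Real.exp 1 ≤
      sSup {x : ℝ | ∃ f ∈ B1, x = ‖taylorCoeff f n‖}) ∧
    (0 < 2 / Real.exp 1) ∧
    (∀ f0 ∈ B1, ‖taylorCoeff f0 n‖ =
        sSup {x : ℝ | ∃ f ∈ B1, x = ‖taylorCoeff f n‖} →
      ¬ ∃ a : ℂ, ∀ z ∈ Metric.ball (0 : ℂ) 1, f0 z = a) := by
  have hn0 : n ≠ 0 := Nat.one_le_iff_ne_zero.1 hn
  set S := {x : ℝ | ∃ f ∈ B1, x = ‖taylorCoeff f n‖}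
  have hbdd : BddAbove S := ⟨1, by
    rintro _ ⟨f, hf, rfl⟩
    exact norm_taylorCoeff_le_one_of_mem_B1 hf n⟩
  have hW : 2 / Real.exp 1 ∈ S := ⟨_, comp_pow_mem_B1 kappa0_mem_B1 hn0,
    (norm_taylorCoeff_kappa0_comp_pow hn0).symm⟩
  have h2e : 2 / Real.exp 1 ≤ sSup S := le_csSup hbdd hW
  have hpos : 0 < 2 / Real.exp 1 := by positivity
  have hnc : ∀ f0 : ℂ → ℂ, ‖taylorCoeff f0 n‖ = sSup S →
      ¬ ∃ a : ℂ, ∀ z ∈ ball (0 : ℂ) 1, f0 z = a := by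
    rintro f0 hf0 ⟨a, ha⟩
    rw [taylorCoeff_eq_zero_of_eventuallyEq_const
      (eventuallyEq_of_mem (ball_mem_nhds 0 one_pos) ha) hn0, norm_zero] at hf0
    linarith
  refine ⟨?_, h2e, hpos, fun f0 _ => hnc f0⟩
  obtain ⟨u, -, hu, hmem⟩ := exists_seq_tendsto_sSup ⟨_, hW⟩ hbdd
  choose F hF hFu using hmem
  obtain ⟨φ, hφ, f0, hlim, hcoeff⟩ := exists_subseq_tendstoLocallyUniformlyOn_of_mem_B1 hF
  have hf0 : ‖taylorCoeff f0 n‖ = sSup S :=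
    tendsto_nhds_unique (hcoeff n).norm
      (by simpa only [Function.comp_def, hFu] using hu.comp hφ.tendsto_atTop)
  exact ⟨f0, mem_B1_of_tendstoLocallyUniformlyOn (fun j => hF (φ j)) hlim (hnc f0 hf0), hf0⟩
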